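/- arXiv:2508.14716 — 3 statements merged into one kernel-verified Lean document; each statement's English description precedes it below -/
import Mathlib

section
/- Chain inclusion of committed anchors (Lemma: follow1, abstract version): In a DAG where every vertex at round r+1 has edges to vertices of at least n − f distinct parties at round r, if a block B at round r is in the past (reachable set) of blocks from at least n − f distinct parties at round r+1, then B is in the past of every valid block at every round r' ≥ r + 2. -/
/-- abstract Lemma follow1: if block `B` of round `r` is in the past of
the round-`(r+1)` blocks of at least `n - f` parties, and every valid block at round
`ρ + 1` references (with past-inclusion) valid blocks of at least `n - f` distinct
parties at round `ρ`, then `B` is in the past of every valid block at every round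
`r' ≥ r + 2`.  Blocks are indexed by (round, party). -/
theorem stmt_3 (n f : ℕ) (hn : 3 * f + 1 ≤ n)
    (past : ℕ × Fin n → Set (ℕ × Fin n))
    (valid : ℕ × Fin n → Prop)
    (r : ℕ) (B : ℕ × Fin n) (hBr : B.1 = r)
    -- validity: a valid block at round ρ+1 references valid blocks of ≥ n-f parties at round ρ
    (hvalid : ∀ C : ℕ × Fin n, valid C → ∀ ρ : ℕ, C.1 = ρ + 1 →
      ∃ P : Finset (Fin n), n - f ≤ P.card ∧
        ∀ p ∈ P, valid (ρ, p) ∧ (ρ, p) ∈ past C ∧ past (ρ, p) ⊆ past C)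
    -- hypothesis: ≥ n-f parties' round-(r+1) blocks are valid and have B in their past
    (hsupport : ∃ Q : Finset (Fin n), n - f ≤ Q.card ∧
      ∀ p ∈ Q, valid (r + 1, p) ∧ B ∈ past (r + 1, p)) :
    ∀ r' : ℕ, r + 2 ≤ r' → ∀ p : Fin n, valid (r', p) → B ∈ past (r', p) := by
  obtain ⟨Q, hQcard, hQ⟩ := hsupport
  have key : ∀ k : ℕ, ∀ p : Fin n, valid (r + 2 + k, p) → B ∈ past (r + 2 + k, p) := by
    intro k
    induction k with
    | zero =>
      intro p hvp
      obtain ⟨P, hPcard, hP⟩ := hvalid (r + 2 + 0, p) hvp (r + 1) (by simp [Nat.add_assoc])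
      -- P and Q intersect
      have hinter : (P ∩ Q).Nonempty := by
        by_contra h
        rw [Finset.not_nonempty_iff_eq_empty] at h
        have hdisj : Disjoint P Q := Finset.disjoint_iff_inter_eq_empty.mpr h
        have := Finset.card_union_of_disjoint hdisj ▸ Finset.card_le_univ (P ∪ Q)
        simp only [Finset.card_univ, Fintype.card_fin] at this
        omega
      obtain ⟨q, hq⟩ := hinter
      obtain ⟨hqP, hqQ⟩ := Finset.mem_inter.mp hq
      obtain ⟨_, _, hsub⟩ := hP q hqP
      exact hsub (hQ q hqQ).2
    | succ m ih =>
      intro p hvp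
      obtain ⟨P, hPcard, hP⟩ := hvalid (r + 2 + (m + 1), p) hvp (r + 2 + m) (by omega)
      have hPne : P.Nonempty := Finset.card_pos.mp (by omega)
      obtain ⟨q, hqP⟩ := hPne
      obtain ⟨hvq, _, hsub⟩ := hP q hqP
      exact hsub (ih q hvq)
  intro r' hr' p hvp
  obtain ⟨k, rfl⟩ : ∃ k, r' = r + 2 + k := ⟨r' - (r + 2), by omega⟩
  exact key k p hvp
end

section
/- Agreement of commits (abstract version of Lemma: agreement): let C_i and C_j be the sets of blocks committed by parties i and j. If (a) whenever i commits B there exists B' ∈ C_j with round(B') ≥ round(B), (b) any two committed blocks are equal or one is in the past of the other, (c) a block in the past of a committed block of higher round is itself committed by the committing party, and (d) no block of strictly larger round is in the past of a block of smaller round, then C_i ⊆ C_j. -/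
/-- abstract Lemma agreement: under hypotheses (a)-(d), the set of
blocks committed by party `i` is contained in that committed by party `j`. -/
theorem stmt_11 {Block : Type*} (round : Block → ℕ) (prec : Block → Block → Prop)
    (Ci Cj : Set Block)
    -- (d) past is compatible with rounds
    (hcompat : ∀ B B' : Block, prec B B' → round B < round B')
    -- (a) whenever i commits B, j commits some block of at least that round
    (ha : ∀ B ∈ Ci, ∃ B' ∈ Cj, round B ≤ round B')
    -- (b) any two committed blocks are equal or comparable by past
    (hb : ∀ B ∈ Ci, ∀ B' ∈ Cj, B = B' ∨ prec B B' ∨ prec B' B)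
    -- (c) anything in the past of a block committed by j is committed by j
    (hc : ∀ B' ∈ Cj, ∀ B : Block, prec B B' → B ∈ Cj) :
    Ci ⊆ Cj := by
  intro B hB
  obtain ⟨B', hB', hr⟩ := ha B hB
  rcases hb B hB B' hB' with rfl | h | h
  · exact hB'
  · exact hc B' hB' B h
  · exact absurd (hcompat B' B h) (by omega)
end

section
/- Adversarial delay tradeoff: with n parties and t Byzantine, under round-robin anchor selection over a period of n consecutive rounds, the number of rounds r such that the anchors of both rounds r−2 and r−1 are honest is at least n − 2t; hence at least n − 2t commits occur per n rounds (deterministic counting version of the latency lemma). -/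
/-!
A round `r` fails to commit only if the anchor of round `r - 2` or of round `r - 1` is Byzantine.
For a fixed lag `c`, the anchors of the rounds `r - c` over a window of `n` consecutive rounds are
pairwise distinct, so each of the two lags meets the `t` Byzantine parties at most `t` times, and
at most `2t` rounds of the window are spoiled.
-/

open Finset

lemma injOn_Ico_sub_mod {n : ℕ} (hn : 0 < n) {r₀ c : ℕ} (hc : c ≤ r₀) :
    Set.InjOn (fun r => (⟨(r - c) % n, Nat.mod_lt _ hn⟩ : Fin n)) (Ico r₀ (r₀ + n)) := by
  intro r hr s hs hrs
  simp only [coe_Ico, Set.mem_Ico] at hr hs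
  have hmod : (r - c) % n = (s - c) % n := congrArg Fin.val hrs
  have hsub : r - c = s - c :=
    Nat.mod_injOn_Ico (r₀ - c) n (by simp only [coe_Ico, Set.mem_Ico]; omega)
      (by simp only [coe_Ico, Set.mem_Ico]; omega) hmod
  omega

lemma card_filter_Ico_sub_mod_mem_le {n : ℕ} (hn : 0 < n) (B : Finset (Fin n)) {r₀ c : ℕ}
    (hc : c ≤ r₀) :
    ((Ico r₀ (r₀ + n)).filter (fun r => (⟨(r - c) % n, Nat.mod_lt _ hn⟩ : Fin n) ∈ B)).card ≤
      B.card :=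
  card_le_card_of_injOn _ (fun _ hr => (mem_filter.mp hr).2)
    ((injOn_Ico_sub_mod hn hc).mono (filter_subset _ _))

lemma card_filter_Ico_sub_mod_not_mem_le {n t : ℕ} (hn : 0 < n) (H : Finset (Fin n))
    (hH : H.card = n - t) {r₀ c : ℕ} (hc : c ≤ r₀) :
    ((Ico r₀ (r₀ + n)).filter (fun r => (⟨(r - c) % n, Nat.mod_lt _ hn⟩ : Fin n) ∉ H)).card ≤
      t := by
  have hcompl : Hᶜ.card ≤ t := by
    rw [card_compl, Fintype.card_fin, hH]
    omega
  simpa only [mem_compl] using (card_filter_Ico_sub_mod_mem_le hn Hᶜ hc).trans hcompl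

theorem stmt_18_general (n t : ℕ) (hn : 0 < n)
    (H : Finset (Fin n)) (hH : H.card = n - t)
    (r₀ : ℕ) (hr₀ : 2 ≤ r₀) :
    n - 2 * t ≤ ((Finset.Ico r₀ (r₀ + n)).filter
      (fun r => (⟨(r - 2) % n, Nat.mod_lt _ hn⟩ : Fin n) ∈ H ∧
                 (⟨(r - 1) % n, Nat.mod_lt _ hn⟩ : Fin n) ∈ H)).card := by
  set W := Ico r₀ (r₀ + n)
  set spoiled : ℕ → Finset ℕ := fun c =>
    W.filter (fun r => (⟨(r - c) % n, Nat.mod_lt _ hn⟩ : Fin n) ∉ H)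
  have hspoiled₂ : (spoiled 2).card ≤ t := card_filter_Ico_sub_mod_not_mem_le hn H hH hr₀
  have hspoiled₁ : (spoiled 1).card ≤ t := card_filter_Ico_sub_mod_not_mem_le hn H hH (by omega)
  have hsplit := card_filter_add_card_filter_not (s := W)
    (fun r => (⟨(r - 2) % n, Nat.mod_lt _ hn⟩ : Fin n) ∈ H ∧
      (⟨(r - 1) % n, Nat.mod_lt _ hn⟩ : Fin n) ∈ H)
  have hfail : (W.filter fun r => ¬((⟨(r - 2) % n, Nat.mod_lt _ hn⟩ : Fin n) ∈ H ∧
      (⟨(r - 1) % n, Nat.mod_lt _ hn⟩ : Fin n) ∈ H)).card ≤ (spoiled 2).card + (spoiled 1).card :=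
    calc _ ≤ (spoiled 2 ∪ spoiled 1).card := card_le_card fun r hr => by
            simp only [spoiled, mem_filter, mem_union] at hr ⊢
            tauto
      _ ≤ _ := card_union_le _ _
  have hW : W.card = n := by simp [W]
  omega

/-- deterministic counting version of the latency lemma: with
round-robin anchors `r ↦ r mod n` and honest set `H` of size `n - t`, in any window
of `n` consecutive rounds (starting at `r₀ ≥ 2`) at least `n - 2t` rounds have both
preceding anchors honest, hence at least `n - 2t` commits per `n` rounds. -/
theorem stmt_18 (n t : ℕ) (hn : 0 < n) (ht : t ≤ n)
    (H : Finset (Fin n)) (hH : H.card = n - t)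
    (r₀ : ℕ) (hr₀ : 2 ≤ r₀) :
    n - 2 * t ≤ ((Finset.Ico r₀ (r₀ + n)).filter
      (fun r => (⟨(r - 2) % n, Nat.mod_lt _ hn⟩ : Fin n) ∈ H ∧
                 (⟨(r - 1) % n, Nat.mod_lt _ hn⟩ : Fin n) ∈ H)).card :=
  stmt_18_general n t hn H hH r₀ hr₀
end
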